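/- Let F be a field and b, c ∈ F, and let W be the Tate normal form E(b,c): y² + (1−c)xy − by = x³ − bx². If the discriminant Δ of W is nonzero, then P = (0,0) is an affine point of W, and in the group of F-rational points one has 2•P = (b, bc) and 3•P = (c, b − c). -/

import Mathlib

/-!
The tangent to `E(b,c)` at `P = (0,0)` is the horizontal line `y = 0` (as `a₄ = 0`); it meets the
curve again at `x = b`, so `2P = -(b, 0) = (b, bc)`. The chord through `2P` and `P` has slope `c`,
which gives `3P = (c, b - c)`. Both computations need `b ≠ 0`, which holds because `b³ ∣ Δ`.
-/

open WeierstrassCurve WeierstrassCurve.Affine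

section TateNormalForm

variable {F : Type*} [Field F]

@[simps]
def tateNormalForm (b c : F) : Affine F :=
  { a₁ := 1 - c, a₂ := -b, a₃ := -b, a₄ := 0, a₆ := 0 }

variable (b c : F)

theorem tateNormalForm_Δ :
    (tateNormalForm b c).Δ =
      b ^ 3 * (16 * b ^ 2 - 8 * b * c ^ 2 - 20 * b * c + b + c * (c - 1) ^ 3) := by
  simp only [Δ, b₂, b₄, b₆, b₈, tateNormalForm_a₁, tateNormalForm_a₂, tateNormalForm_a₃,
    tateNormalForm_a₄, tateNormalForm_a₆]
  ring

variable {b c}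

theorem ne_zero_of_tateNormalForm_Δ_ne_zero (hΔ : (tateNormalForm b c).Δ ≠ 0) : b ≠ 0 := by
  rintro rfl
  simp [tateNormalForm_Δ] at hΔ

variable (b c)

theorem tateNormalForm_equation_zero_zero : (tateNormalForm b c).Equation 0 0 := by
  simp [equation_iff]

theorem tateNormalForm_equation_b_bc : (tateNormalForm b c).Equation b (b * c) := by
  rw [equation_iff]
  simp only [tateNormalForm_a₁, tateNormalForm_a₂, tateNormalForm_a₃, tateNormalForm_a₄,
    tateNormalForm_a₆]
  ring

theorem tateNormalForm_equation_c_b_sub_c : (tateNormalForm b c).Equation c (b - c) := by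
  rw [equation_iff]
  simp only [tateNormalForm_a₁, tateNormalForm_a₂, tateNormalForm_a₃, tateNormalForm_a₄,
    tateNormalForm_a₆]
  ring

variable {b c}

theorem tateNormalForm_zero_ne_negY (hb : b ≠ 0) : (0 : F) ≠ (tateNormalForm b c).negY 0 0 := by
  simpa [negY] using hb.symm

variable [DecidableEq F]

theorem tateNormalForm_slope_zero_zero (hb : b ≠ 0) : (tateNormalForm b c).slope 0 0 0 0 = 0 := by
  simp [slope_of_Y_ne rfl (tateNormalForm_zero_ne_negY hb)]

theorem tateNormalForm_slope_b_zero (hb : b ≠ 0) :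
    (tateNormalForm b c).slope b 0 (b * c) 0 = c := by
  rw [slope_of_X_ne hb]
  field_simp
  ring

theorem tateNormalForm_some_zero_zero_add_self (hb : b ≠ 0)
    (h : (tateNormalForm b c).Nonsingular 0 0) (h₂ : (tateNormalForm b c).Nonsingular b (b * c)) :
    Point.some _ _ h + Point.some _ _ h = Point.some _ _ h₂ := by
  rw [Point.add_self_of_Y_ne (tateNormalForm_zero_ne_negY hb), Point.some.injEq,
    tateNormalForm_slope_zero_zero hb]
  simp only [addY, negAddY, addX, negY, tateNormalForm_a₁, tateNormalForm_a₂, tateNormalForm_a₃]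
  constructor <;> ring

theorem tateNormalForm_some_b_bc_add_some_zero_zero (hb : b ≠ 0)
    (h₂ : (tateNormalForm b c).Nonsingular b (b * c)) (h : (tateNormalForm b c).Nonsingular 0 0)
    (h₃ : (tateNormalForm b c).Nonsingular c (b - c)) :
    Point.some _ _ h₂ + Point.some _ _ h = Point.some _ _ h₃ := by
  rw [Point.add_of_X_ne hb, Point.some.injEq, tateNormalForm_slope_b_zero hb]
  simp only [addY, negAddY, addX, negY, tateNormalForm_a₁, tateNormalForm_a₂, tateNormalForm_a₃]
  constructor <;> ring

end TateNormalForm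

open Classical in
theorem tate_normal_form_two_three_smul (F : Type*) [Field F] (b c : F)
    (W : WeierstrassCurve.Affine F)
    (hW : W = { a₁ := 1 - c, a₂ := -b, a₃ := -b, a₄ := 0, a₆ := 0 })
    (hΔ : W.Δ ≠ 0) :
    ∃ (h : W.Nonsingular 0 0) (h2 : W.Nonsingular b (b * c))
      (h3 : W.Nonsingular c (b - c)),
      (2 : ℤ) • (WeierstrassCurve.Affine.Point.some _ _ h) =
        WeierstrassCurve.Affine.Point.some _ _ h2 ∧
      (3 : ℤ) • (WeierstrassCurve.Affine.Point.some _ _ h) =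
        WeierstrassCurve.Affine.Point.some _ _ h3 := by
  obtain rfl : W = tateNormalForm b c := hW
  have hb := ne_zero_of_tateNormalForm_Δ_ne_zero hΔ
  have h := (equation_iff_nonsingular_of_Δ_ne_zero hΔ).mp (tateNormalForm_equation_zero_zero b c)
  have h₂ := (equation_iff_nonsingular_of_Δ_ne_zero hΔ).mp (tateNormalForm_equation_b_bc b c)
  have h₃ := (equation_iff_nonsingular_of_Δ_ne_zero hΔ).mp (tateNormalForm_equation_c_b_sub_c b c)
  have two_smul : (2 : ℤ) • Point.some _ _ h = Point.some _ _ h₂ := by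
    rw [two_zsmul, tateNormalForm_some_zero_zero_add_self hb]
  refine ⟨h, h₂, h₃, two_smul, ?_⟩
  rw [show (3 : ℤ) = 2 + 1 by norm_num, add_zsmul, one_zsmul, two_smul,
    tateNormalForm_some_b_bc_add_some_zero_zero hb]
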